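/- arXiv:2402.00605 — 7 statements merged into one kernel-verified Lean document; each statement's English description precedes it below -/
import Mathlib

section
/- On a symplectic Lie algebra (g, ω), the bilinear product ∇ defined implicitly by ω(∇_x y, z) = -ω(y, [x,z]) for all x,y,z is a flat torsion-free connection: it satisfies ∇_x y - ∇_y x = [x,y] for all x,y, and ∇_x∇_y z - ∇_y∇_x z - ∇_{[x,y]} z = 0 for all x,y,z. -/
/-!
The defining identity says that `∇_x` is minus the `ω`-adjoint of `ad x = ⁅x, ·⁆`. Pairing with an
arbitrary `w` and using nondegeneracy, torsion-freeness becomes the closedness of `ω` (together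
with its skew-symmetry), and flatness becomes the Jacobi identity `ad ⁅x, y⁆ = ⁅ad x, ad y⁆`,
since taking adjoints reverses the order of composition.
-/

namespace LinearMap

theorem SeparatingLeft.eq_of_forall_apply_eq {R M₁ M₂ M : Type*} [CommRing R]
    [AddCommGroup M₁] [Module R M₁] [AddCommMonoid M₂] [Module R M₂] [AddCommGroup M] [Module R M]
    {B : M₁ →ₗ[R] M₂ →ₗ[R] M} (hB : B.SeparatingLeft) {a b : M₁} (h : ∀ y, B a y = B b y) :
    a = b :=
  sub_eq_zero.mp <| hB _ fun y => by rw [map_sub, sub_apply, h, sub_self]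

end LinearMap

section SymplecticProduct

variable {R L M : Type*} [CommRing R] [LieRing L] [Module R L] [AddCommGroup M] [Module R M]
  {ω : L →ₗ[R] L →ₗ[R] M} {D : L → L → L}

theorem pair_sub_comm_eq_pair_lie (hω : ω.IsAlt)
    (hclosed : ∀ x y z : L, ω ⁅x, y⁆ z + ω ⁅y, z⁆ x + ω ⁅z, x⁆ y = 0)
    (hD : ∀ x y z : L, ω (D x y) z = -(ω y ⁅x, z⁆)) (x y w : L) :
    ω (D x y - D y x) w = ω ⁅x, y⁆ w := by
  have hcyc := hclosed x y w
  rw [← lie_skew w x, map_neg, LinearMap.neg_apply] at hcyc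
  rw [map_sub, LinearMap.sub_apply, hD, hD, hω.neg, hω.neg, eq_comm, ← sub_eq_zero, ← hcyc]
  abel

theorem pair_comp_eq_pair_lie_lie (hD : ∀ x y z : L, ω (D x y) z = -(ω y ⁅x, z⁆))
    (x y z w : L) : ω (D x (D y z)) w = ω z ⁅y, ⁅x, w⁆⁆ := by
  rw [hD, hD, neg_neg]

theorem pair_curvature_eq_zero (hD : ∀ x y z : L, ω (D x y) z = -(ω y ⁅x, z⁆))
    (x y z w : L) : ω (D x (D y z) - D y (D x z) - D ⁅x, y⁆ z) w = 0 := by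
  calc ω (D x (D y z) - D y (D x z) - D ⁅x, y⁆ z) w
      = ω z ⁅y, ⁅x, w⁆⁆ - ω z ⁅x, ⁅y, w⁆⁆ + ω z ⁅⁅x, y⁆, w⁆ := by
        rw [map_sub, map_sub, LinearMap.sub_apply, LinearMap.sub_apply,
          pair_comp_eq_pair_lie_lie hD, pair_comp_eq_pair_lie_lie hD, hD, sub_neg_eq_add]
    _ = 0 := by
        rw [lie_lie, map_sub]
        abel

end SymplecticProduct

theorem symplectic_connection_flat_torsion_free_general
    (L : Type*) [LieRing L] [LieAlgebra ℝ L]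
    (ω : L →ₗ[ℝ] L →ₗ[ℝ] ℝ)
    (halt : ∀ x : L, ω x x = 0)
    (hnd : ∀ x : L, (∀ y : L, ω x y = 0) → x = 0)
    (hclosed : ∀ x y z : L, ω ⁅x, y⁆ z + ω ⁅y, z⁆ x + ω ⁅z, x⁆ y = 0)
    (D : L →ₗ[ℝ] L →ₗ[ℝ] L)
    (hD : ∀ x y z : L, ω (D x y) z = -(ω y ⁅x, z⁆)) :
    (∀ x y : L, D x y - D y x = ⁅x, y⁆) ∧
    (∀ x y z : L, D x (D y z) - D y (D x z) - D ⁅x, y⁆ z = 0) :=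
  ⟨fun x y => LinearMap.SeparatingLeft.eq_of_forall_apply_eq hnd
      (pair_sub_comm_eq_pair_lie halt hclosed hD x y),
    fun x y z => hnd _ (pair_curvature_eq_zero hD x y z)⟩

/-- On a symplectic Lie algebra, the product `∇` defined by
`ω(∇_x y, z) = -ω(y, [x,z])` is a flat torsion-free connection. -/
theorem symplectic_connection_flat_torsion_free
    (L : Type*) [LieRing L] [LieAlgebra ℝ L] [FiniteDimensional ℝ L]
    (ω : L →ₗ[ℝ] L →ₗ[ℝ] ℝ)
    (halt : ∀ x : L, ω x x = 0)
    (hnd : ∀ x : L, (∀ y : L, ω x y = 0) → x = 0)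
    (hclosed : ∀ x y z : L, ω ⁅x, y⁆ z + ω ⁅y, z⁆ x + ω ⁅z, x⁆ y = 0)
    (D : L →ₗ[ℝ] L →ₗ[ℝ] L)
    (hD : ∀ x y z : L, ω (D x y) z = -(ω y ⁅x, z⁆)) :
    (∀ x y : L, D x y - D y x = ⁅x, y⁆) ∧
    (∀ x y z : L, D x (D y z) - D y (D x z) - D ⁅x, y⁆ z = 0) :=
  symplectic_connection_flat_torsion_free_general L ω halt hnd hclosed D hD
end

section
/- Let (g, ω) be a symplectic Lie algebra with a Lagrangian ideal j, and h = g/j. The formula ω_h(∇̄_{x̄} ȳ, u) = -ω(y, [x,u]) for u ∈ j (using the isomorphism ω_h : h → j*) defines a well-defined bilinear operation ∇̄ on h that is a flat torsion-free connection on the quotient Lie algebra h. -/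
/-!
The pairing `x̄ ↦ ω(x, ·)|_j` identifies `L ⧸ j` with `j*`: its kernel is `j^⊥ω = j`, and it is
onto by nondegeneracy. Through this identification `∇̄_x̄` is the contragredient action
`φ ↦ -φ ∘ ad x` of `L` on `j*`, which depends only on `x̄` because an isotropic ideal is abelian.
Flatness is then the Jacobi identity, and torsion-freeness is the closedness of `ω` in the form
`ω([x,y],u) = ω(x,[y,u]) - ω(y,[x,u])`.
-/

open Module

theorem apply_lie_eq_sub_of_closed {K L : Type*} [CommRing K] [LieRing L] [LieAlgebra K L]
    {ω : L →ₗ[K] L →ₗ[K] K} (halt : ω.IsAlt)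
    (hclosed : ∀ x y z : L, ω ⁅x, y⁆ z + ω ⁅y, z⁆ x + ω ⁅z, x⁆ y = 0) (x y z : L) :
    ω ⁅x, y⁆ z = ω x ⁅y, z⁆ - ω y ⁅x, z⁆ := by
  have h₁ : ω ⁅y, z⁆ x = -ω x ⁅y, z⁆ := (halt.neg _ _).symm
  have h₂ : ω ⁅z, x⁆ y = ω y ⁅x, z⁆ := by rw [← halt.neg, ← lie_skew, map_neg, neg_neg]
  linear_combination hclosed x y z - h₁ - h₂

namespace LieIdeal

variable {K L : Type*} [Field K] [LieRing L] [LieAlgebra K L]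
  {ω : L →ₗ[K] L →ₗ[K] K} (j : LieIdeal K L)

theorem isLieAbelian_of_isotropic (hnd : ω.SeparatingLeft)
    (hclosed : ∀ x y z : L, ω ⁅x, y⁆ z + ω ⁅y, z⁆ x + ω ⁅z, x⁆ y = 0)
    (hiso : ∀ u ∈ j, ∀ v ∈ j, ω u v = 0) : IsLieAbelian j := by
  refine ⟨fun u v => Subtype.ext (hnd _ fun y => ?_)⟩
  have h₁ : ω ⁅(v : L), y⁆ u = 0 := hiso _ (lie_mem_left K L j _ _ v.2) _ u.2
  have h₂ : ω ⁅y, (u : L)⁆ v = 0 := hiso _ (lie_mem_right K L j _ _ u.2) _ v.2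
  simpa [h₁, h₂] using hclosed u v y

variable (ω) in
def dualPairing : L →ₗ[K] Dual K j := j.toSubmodule.dualRestrict ∘ₗ ω

@[simp]
theorem dualPairing_apply (x : L) (u : j) : j.dualPairing ω x u = ω x u := rfl

theorem ker_dualPairing (hlag : ∀ x : L, x ∈ j ↔ ∀ u ∈ j, ω x u = 0) :
    LinearMap.ker (j.dualPairing ω) = j.toSubmodule := by
  ext x
  simp [hlag x, LinearMap.ext_iff]

theorem dualPairing_surjective [FiniteDimensional K L] (hnd : ω.SeparatingLeft) :
    Function.Surjective (j.dualPairing ω) :=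
  (Subspace.dualRestrict_surjective (W := j.toSubmodule)).comp
    (ω.linearEquivOfInjective
      (LinearMap.ker_eq_bot.mp (LinearMap.separatingLeft_iff_ker_eq_bot.mp hnd))
      Subspace.dual_finrank_eq.symm).surjective

noncomputable def quotientEquivDual [FiniteDimensional K L] (hnd : ω.SeparatingLeft)
    (hlag : ∀ x : L, x ∈ j ↔ ∀ u ∈ j, ω x u = 0) : (L ⧸ j) ≃ₗ[K] Dual K j :=
  (Submodule.quotEquivOfEq _ _ (j.ker_dualPairing hlag)).symm.trans
    ((j.dualPairing ω).quotKerEquivOfSurjective (j.dualPairing_surjective hnd))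

@[simp]
theorem quotientEquivDual_mk [FiniteDimensional K L] (hnd : ω.SeparatingLeft)
    (hlag : ∀ x : L, x ∈ j ↔ ∀ u ∈ j, ω x u = 0) (x : L) (u : j) :
    j.quotientEquivDual hnd hlag (LieSubmodule.Quotient.mk x) u = ω x u := rfl

def dualAction : L →ₗ[K] Module.End K (Dual K j) :=
  Dual.transpose ∘ₗ (-(LieModule.toEnd K L j : L →ₗ[K] Module.End K j))

@[simp]
theorem dualAction_apply (x : L) (φ : Dual K j) (u : j) : j.dualAction x φ u = -φ ⁅x, u⁆ := by
  simp [dualAction, Dual.transpose_apply]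

noncomputable def quotientConnection [IsLieAbelian j] (e : (L ⧸ j) ≃ₗ[K] Dual K j) :
    (L ⧸ j) →ₗ[K] Module.End K (L ⧸ j) :=
  j.toSubmodule.liftQ (e.symm.conj.toLinearMap ∘ₗ j.dualAction) fun x hx => by
    have hzero : j.dualAction x = 0 := by
      ext φ u
      have : ⁅x, u⁆ = 0 := Subtype.ext (congrArg Subtype.val (trivial_lie_zero j j ⟨x, hx⟩ u))
      simp [this]
    simp [hzero]

theorem apply_quotientConnection_mk [IsLieAbelian j] (e : (L ⧸ j) ≃ₗ[K] Dual K j) (x : L)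
    (c : L ⧸ j) (u : j) :
    e (j.quotientConnection e (LieSubmodule.Quotient.mk x) c) u = -e c ⁅x, u⁆ := by
  change e (e.symm (j.dualAction x (e c))) u = _
  simp

theorem quotientConnection_flat [IsLieAbelian j] (e : (L ⧸ j) ≃ₗ[K] Dual K j) (a b c : L ⧸ j) :
    j.quotientConnection e a (j.quotientConnection e b c)
        - j.quotientConnection e b (j.quotientConnection e a c)
      = j.quotientConnection e ⁅a, b⁆ c := by
  obtain ⟨x, rfl⟩ := LieSubmodule.Quotient.surjective_mk' j a
  obtain ⟨y, rfl⟩ := LieSubmodule.Quotient.surjective_mk' j b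
  simp only [LieSubmodule.Quotient.mk'_apply, ← LieSubmodule.Quotient.mk_bracket]
  refine e.injective (LinearMap.ext fun u => ?_)
  simp only [map_sub, LinearMap.sub_apply, apply_quotientConnection_mk, leibniz_lie x y u, map_add]
  ring

theorem quotientEquivDual_quotientConnection_mk_mk [FiniteDimensional K L]
    (hnd : ω.SeparatingLeft) (hlag : ∀ x : L, x ∈ j ↔ ∀ u ∈ j, ω x u = 0) [IsLieAbelian j]
    (x y : L) (u : j) :
    j.quotientEquivDual hnd hlag (j.quotientConnection (j.quotientEquivDual hnd hlag)
      (LieSubmodule.Quotient.mk x) (LieSubmodule.Quotient.mk y)) u = -ω y ⁅x, (u : L)⁆ := by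
  rw [apply_quotientConnection_mk, quotientEquivDual_mk, LieSubmodule.coe_bracket]

theorem quotientConnection_torsionFree [FiniteDimensional K L] (halt : ω.IsAlt)
    (hnd : ω.SeparatingLeft) (hclosed : ∀ x y z : L, ω ⁅x, y⁆ z + ω ⁅y, z⁆ x + ω ⁅z, x⁆ y = 0)
    (hlag : ∀ x : L, x ∈ j ↔ ∀ u ∈ j, ω x u = 0) [IsLieAbelian j] (a b : L ⧸ j) :
    j.quotientConnection (j.quotientEquivDual hnd hlag) a b
        - j.quotientConnection (j.quotientEquivDual hnd hlag) b a = ⁅a, b⁆ := by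
  obtain ⟨x, rfl⟩ := LieSubmodule.Quotient.surjective_mk' j a
  obtain ⟨y, rfl⟩ := LieSubmodule.Quotient.surjective_mk' j b
  simp only [LieSubmodule.Quotient.mk'_apply, ← LieSubmodule.Quotient.mk_bracket]
  refine (j.quotientEquivDual hnd hlag).injective (LinearMap.ext fun u => ?_)
  simp only [map_sub, LinearMap.sub_apply, quotientEquivDual_quotientConnection_mk_mk,
    quotientEquivDual_mk, apply_lie_eq_sub_of_closed halt hclosed]
  ring

end LieIdeal

/-- For a Lagrangian ideal `j` of a symplectic Lie algebra `(L, ω)`, the formula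
`ω_h(∇̄_{x̄} ȳ, u) = -ω(y, [x,u])` (for `u ∈ j`) defines a well-defined bilinear
operation on the quotient `L ⧸ j` which is a flat torsion-free connection. -/
theorem quotient_flat_torsion_free_connection
    (L : Type*) [LieRing L] [LieAlgebra ℝ L] [FiniteDimensional ℝ L]
    (ω : L →ₗ[ℝ] L →ₗ[ℝ] ℝ)
    (halt : ∀ x : L, ω x x = 0)
    (hnd : ∀ x : L, (∀ y : L, ω x y = 0) → x = 0)
    (hclosed : ∀ x y z : L, ω ⁅x, y⁆ z + ω ⁅y, z⁆ x + ω ⁅z, x⁆ y = 0)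
    (j : LieIdeal ℝ L)
    (hlag : ∀ x : L, x ∈ j ↔ ∀ u ∈ j, ω x u = 0) :
    ∃ Dq : (L ⧸ j) →ₗ[ℝ] (L ⧸ j) →ₗ[ℝ] (L ⧸ j),
      (∀ x y z : L,
        LieSubmodule.Quotient.mk (N := j) z
            = Dq (LieSubmodule.Quotient.mk (N := j) x)
                  (LieSubmodule.Quotient.mk (N := j) y) →
          ∀ u ∈ j, ω z u = -(ω y ⁅x, u⁆)) ∧
      (∀ a b : L ⧸ j, Dq a b - Dq b a = ⁅a, b⁆) ∧
      (∀ a b c : L ⧸ j, Dq a (Dq b c) - Dq b (Dq a c) = Dq ⁅a, b⁆ c) := by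
  have : IsLieAbelian j := j.isLieAbelian_of_isotropic hnd hclosed fun u hu => (hlag u).mp hu
  refine ⟨j.quotientConnection (j.quotientEquivDual hnd hlag), fun x y z hz u hu => ?_,
    j.quotientConnection_torsionFree halt hnd hclosed hlag, j.quotientConnection_flat _⟩
  have h := congrArg (fun c => j.quotientEquivDual hnd hlag c ⟨u, hu⟩) hz
  rwa [j.quotientEquivDual_mk hnd hlag, j.quotientEquivDual_quotientConnection_mk_mk hnd hlag] at h
end

section
/- With g_{∇,α} = h ⊕ h* the Lagrangian extension of a flat Lie algebra (h, ∇) by a 2-cocycle α ∈ Z²_ρ(h, h*), the non-degenerate alternating form ω₀ defined by ω₀(x,ξ) = ξ(x), ω₀(x,y)=0, ω₀(ξ,η)=0 (x,y ∈ h, ξ,η ∈ h*) is a symplectic form on g_{∇,α} (i.e., satisfies the closedness cocycle identity) if and only if α satisfies the Bianchi identity α(x,y)(z) + α(y,z)(x) + α(z,x)(y) = 0 for all x,y,z ∈ h. -/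
/-!
Pairing the bracket with the canonical form, every term involving a dual component `ξ` collects
into `ξ (∇_y z - ∇_z y - [y, z])`, which vanishes because `∇` is torsion-free. The cyclic sum
defining `dω₀` is therefore minus the cyclic sum of `α`, so `ω₀` is closed exactly when `α`
satisfies the Bianchi identity.
-/

namespace LagrangianExtension

variable {R h : Type*} [CommRing R] [LieRing h] [Module R h]

/-- The bracket of `h ⊕ h*`; with `D x = ∇_x`, the dual part is `α(x, y) + ρ(x)η - ρ(y)ξ`. -/
def bracket (D : h → h →ₗ[R] h) (α : h → h → Module.Dual R h)
    (a b : h × Module.Dual R h) : h × Module.Dual R h :=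
  (⁅a.1, b.1⁆, α a.1 b.1 - b.2.comp (D a.1) + a.2.comp (D b.1))

def canonicalForm (a b : h × Module.Dual R h) : R :=
  b.2 a.1 - a.2 b.1

theorem canonicalForm_bracket_cyclic {D : h → h →ₗ[R] h} (α : h → h → Module.Dual R h)
    (htf : ∀ x y : h, D x y - D y x = ⁅x, y⁆) (a b c : h × Module.Dual R h) :
    canonicalForm (bracket D α a b) c + canonicalForm (bracket D α b c) a
        + canonicalForm (bracket D α c a) b
      = -(α a.1 b.1 c.1 + α b.1 c.1 a.1 + α c.1 a.1 b.1) := by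
  have torsion_free (ξ : Module.Dual R h) (x y : h) : ξ (D x y) - ξ (D y x) = ξ ⁅x, y⁆ := by
    rw [← map_sub, htf]
  simp only [canonicalForm, bracket, LinearMap.add_apply, LinearMap.sub_apply,
    LinearMap.comp_apply]
  linear_combination -(torsion_free a.2 b.1 c.1 + torsion_free b.2 c.1 a.1
    + torsion_free c.2 a.1 b.1)

end LagrangianExtension

open LagrangianExtension in
theorem canonical_form_symplectic_iff_bianchi_general
    (h : Type*) [LieRing h] [LieAlgebra ℝ h]
    (D : h →ₗ[ℝ] h →ₗ[ℝ] h)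
    (htf : ∀ x y : h, D x y - D y x = ⁅x, y⁆)
    (α : h →ₗ[ℝ] h →ₗ[ℝ] Module.Dual ℝ h)
    (B : (h × Module.Dual ℝ h) → (h × Module.Dual ℝ h) → (h × Module.Dual ℝ h))
    (hB : ∀ a b : h × Module.Dual ℝ h,
      B a b = (⁅a.1, b.1⁆, α a.1 b.1 - (b.2).comp (D a.1) + (a.2).comp (D b.1)))
    (W : (h × Module.Dual ℝ h) → (h × Module.Dual ℝ h) → ℝ)
    (hW : ∀ a b : h × Module.Dual ℝ h, W a b = b.2 a.1 - a.2 b.1) :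
    (∀ a b c : h × Module.Dual ℝ h, W (B a b) c + W (B b c) a + W (B c a) b = 0)
      ↔ (∀ x y z : h, α x y z + α y z x + α z x y = 0) := by
  obtain rfl : B = bracket (⇑D) (fun x y => α x y) := funext₂ hB
  obtain rfl : W = canonicalForm := funext₂ hW
  have cyclic := canonicalForm_bracket_cyclic (fun x y => α x y) htf
  constructor
  · intro closed x y z
    have := cyclic (x, 0) (y, 0) (z, 0)
    rwa [closed, eq_comm, neg_eq_zero] at this
  · intro bianchi a b c
    rw [cyclic, bianchi, neg_zero]

/-- On the Lagrangian extension `g_{∇,α} = h ⊕ h*`, the canonical pairing form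
`ω₀((x,ξ),(y,η)) = η(x) - ξ(y)` is closed (i.e. symplectic) if and only if `α`
satisfies the Bianchi identity `α(x,y)(z) + α(y,z)(x) + α(z,x)(y) = 0`. -/
theorem canonical_form_symplectic_iff_bianchi
    (h : Type*) [LieRing h] [LieAlgebra ℝ h] [FiniteDimensional ℝ h]
    (D : h →ₗ[ℝ] h →ₗ[ℝ] h)
    (htf : ∀ x y : h, D x y - D y x = ⁅x, y⁆)
    (hflat : ∀ x y z : h, D x (D y z) - D y (D x z) = D ⁅x, y⁆ z)
    (α : h →ₗ[ℝ] h →ₗ[ℝ] Module.Dual ℝ h)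
    (haltα : ∀ x : h, α x x = 0)
    (hcocycle : ∀ x y z : h,
      -((α y z).comp (D x)) + (α x z).comp (D y) - (α x y).comp (D z)
        - α ⁅x, y⁆ z + α ⁅x, z⁆ y - α ⁅y, z⁆ x = 0)
    (B : (h × Module.Dual ℝ h) → (h × Module.Dual ℝ h) → (h × Module.Dual ℝ h))
    (hB : ∀ a b : h × Module.Dual ℝ h,
      B a b = (⁅a.1, b.1⁆, α a.1 b.1 - (b.2).comp (D a.1) + (a.2).comp (D b.1)))
    (W : (h × Module.Dual ℝ h) → (h × Module.Dual ℝ h) → ℝ)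
    (hW : ∀ a b : h × Module.Dual ℝ h, W a b = b.2 a.1 - a.2 b.1) :
    (∀ a b c : h × Module.Dual ℝ h, W (B a b) c + W (B b c) a + W (B c a) b = 0)
      ↔ (∀ x y z : h, α x y z + α y z x + α z x y = 0) :=
  canonical_form_symplectic_iff_bianchi_general h D htf α B hB W hW
end

section
/- The Chevalley–Eilenberg coboundary preserves the Lagrangian (symmetric/cyclic) conditions: if (h, ∇) is a flat Lie algebra with dual representation ρ, and μ : h → h* is a symmetric 1-cochain (μ(x)(y) = μ(y)(x) for all x,y), then ∂μ, defined by (∂μ)(x,y) = ρ(x)μ(y) - ρ(y)μ(x) - μ([x,y]), satisfies the cyclic Bianchi identity (∂μ)(x,y)(z) + (∂μ)(y,z)(x) + (∂μ)(z,x)(y) = 0 for all x,y,z ∈ h. -/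
theorem symmetric_apply_lie_eq_of_torsionFree {R L : Type*} [CommRing R] [LieRing L]
    [LieAlgebra R L] {D : L →ₗ[R] L →ₗ[R] L} (htf : ∀ x y : L, D x y - D y x = ⁅x, y⁆)
    {μ : L →ₗ[R] Module.Dual R L} (hsym : ∀ x y : L, μ x y = μ y x) (x y z : L) :
    μ ⁅x, y⁆ z = μ z (D x y) - μ z (D y x) := by
  rw [← htf, hsym, map_sub]

theorem coboundary_of_symmetric_cochain_is_lagrangian_general
    (h : Type*) [LieRing h] [LieAlgebra ℝ h]
    (D : h →ₗ[ℝ] h →ₗ[ℝ] h)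
    (htf : ∀ x y : h, D x y - D y x = ⁅x, y⁆)
    (μ : h →ₗ[ℝ] Module.Dual ℝ h)
    (hsym : ∀ x y : h, μ x y = μ y x) :
    ∀ x y z : h,
      (-(μ y (D x z)) + μ x (D y z) - μ ⁅x, y⁆ z)
        + (-(μ z (D y x)) + μ y (D z x) - μ ⁅y, z⁆ x)
        + (-(μ x (D z y)) + μ z (D x y) - μ ⁅z, x⁆ y) = 0 := by
  intro x y z
  simp only [symmetric_apply_lie_eq_of_torsionFree htf hsym]
  ring

/-- The Chevalley–Eilenberg coboundary of a symmetric 1-cochain satisfies the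
cyclic Bianchi identity:
`(∂μ)(x,y)(z) + (∂μ)(y,z)(x) + (∂μ)(z,x)(y) = 0`, where
`(∂μ)(x,y) = ρ(x)μ(y) - ρ(y)μ(x) - μ([x,y])` and `ρ(x)ξ = -ξ∘∇_x`. -/
theorem coboundary_of_symmetric_cochain_is_lagrangian
    (h : Type*) [LieRing h] [LieAlgebra ℝ h] [FiniteDimensional ℝ h]
    (D : h →ₗ[ℝ] h →ₗ[ℝ] h)
    (htf : ∀ x y : h, D x y - D y x = ⁅x, y⁆)
    (hflat : ∀ x y z : h, D x (D y z) - D y (D x z) = D ⁅x, y⁆ z)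
    (μ : h →ₗ[ℝ] Module.Dual ℝ h)
    (hsym : ∀ x y : h, μ x y = μ y x) :
    ∀ x y z : h,
      (-(μ y (D x z)) + μ x (D y z) - μ ⁅x, y⁆ z)
        + (-(μ z (D y x)) + μ y (D z x) - μ ⁅y, z⁆ x)
        + (-(μ x (D z y)) + μ z (D x y) - μ ⁅z, x⁆ y) = 0 :=
  coboundary_of_symmetric_cochain_is_lagrangian_general h D htf μ hsym
end

section
/- Let (g_{∇,α}, ω₀) be a Lagrangian extension of a flat Lie algebra (h, ∇) by α satisfying the Bianchi identity. The flat torsion-free connection * on g_{∇,α} determined by ω₀((a)*(b), c) = -ω₀(b, [a,c]) is given explicitly by: x*y = ∇_x y + α(x,·)(y) (here α(x,·)(y) ∈ h* is the functional z ↦ α(x,z)(y)), ξ₁*ξ₂ = 0, ξ*x = ξ∘(∇_x - ad_x), and x*ξ = -ξ∘ad_x, for all x,y ∈ h and ξ,ξ₁,ξ₂ ∈ h*. -/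
/-!
Since `ω₀` is non-degenerate, each formula is proved by pairing both sides with an arbitrary
`c = (z, ζ)` and expanding `ω₀(b, [a, c])`. The only non-formal step is the mixed product
`ξ * x`, where torsion-freeness `∇_x z - ∇_z x = [x, z]` turns `ξ([x, z])` into the
`ξ ∘ (∇_x - ad_x)` part.
-/

namespace LagrangianExtension

variable {K V : Type*} [Field K] [AddCommGroup V] [Module K V]

/-- The canonical symplectic form `ω₀` on `V ⊕ V*`. -/
def symplecticForm (a b : V × Module.Dual K V) : K := b.2 a.1 - a.2 b.1

theorem symplecticForm_injective {u v : V × Module.Dual K V}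
    (huv : ∀ c, symplecticForm u c = symplecticForm v c) : u = v := by
  have hfst : u.1 = v.1 := Module.eval_apply_injective K <| LinearMap.ext fun φ => by
    simpa [symplecticForm] using huv (0, φ)
  have hsnd : u.2 = v.2 := LinearMap.ext fun z => by
    simpa [symplecticForm] using huv (z, 0)
  exact Prod.ext hfst hsnd

end LagrangianExtension

open LagrangianExtension

theorem induced_connection_explicit_formulas_general
    (h : Type*) [LieRing h] [LieAlgebra ℝ h]
    (D : h →ₗ[ℝ] h →ₗ[ℝ] h)
    (htf : ∀ x y : h, D x y - D y x = ⁅x, y⁆)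
    (α : h →ₗ[ℝ] h →ₗ[ℝ] Module.Dual ℝ h)
    (B : (h × Module.Dual ℝ h) → (h × Module.Dual ℝ h) → (h × Module.Dual ℝ h))
    (hB : ∀ a b : h × Module.Dual ℝ h,
      B a b = (⁅a.1, b.1⁆, α a.1 b.1 - (b.2).comp (D a.1) + (a.2).comp (D b.1)))
    (W : (h × Module.Dual ℝ h) → (h × Module.Dual ℝ h) → ℝ)
    (hW : ∀ a b : h × Module.Dual ℝ h, W a b = b.2 a.1 - a.2 b.1)
    (star : (h × Module.Dual ℝ h) → (h × Module.Dual ℝ h) → (h × Module.Dual ℝ h))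
    (hstar : ∀ a b c : h × Module.Dual ℝ h, W (star a b) c = -(W b (B a c))) :
    (∀ x y : h, star (x, 0) (y, 0) = (D x y, (α x).flip y)) ∧
    (∀ ξ₁ ξ₂ : Module.Dual ℝ h, star (0, ξ₁) (0, ξ₂) = 0) ∧
    (∀ (ξ : Module.Dual ℝ h) (x : h),
      star (0, ξ) (x, 0) = (0, ξ.comp (D x - LieAlgebra.ad ℝ h x))) ∧
    (∀ (x : h) (ξ : Module.Dual ℝ h),
      star (x, 0) (0, ξ) = (0, -(ξ.comp (LieAlgebra.ad ℝ h x)))) := by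
  obtain rfl : W = symplecticForm := funext₂ hW
  have star_eq : ∀ a b u, (∀ c, symplecticForm u c = -symplecticForm b (B a c)) →
      star a b = u := fun a b u hu =>
    symplecticForm_injective fun c => (hstar a b c).trans (hu c).symm
  refine ⟨fun x y => star_eq _ _ _ fun c => ?_, fun ξ₁ ξ₂ => star_eq _ _ _ fun c => ?_,
    fun ξ x => star_eq _ _ _ fun c => ?_, fun x ξ => star_eq _ _ _ fun c => ?_⟩
  all_goals rw [hB]; simp [symplecticForm, ← htf]

/-- On the Lagrangian extension `(g_{∇,α}, ω₀)` of a flat Lie algebra, the flat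
torsion-free connection `*` determined by `ω₀(a*b, c) = -ω₀(b, [a,c])` is given
by the explicit formulas `x*y = ∇_x y + α(x,·)(y)`, `ξ₁*ξ₂ = 0`,
`ξ*x = ξ∘(∇_x - ad_x)` and `x*ξ = -ξ∘ad_x`. -/
theorem induced_connection_explicit_formulas
    (h : Type*) [LieRing h] [LieAlgebra ℝ h] [FiniteDimensional ℝ h]
    (D : h →ₗ[ℝ] h →ₗ[ℝ] h)
    (htf : ∀ x y : h, D x y - D y x = ⁅x, y⁆)
    (hflat : ∀ x y z : h, D x (D y z) - D y (D x z) = D ⁅x, y⁆ z)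
    (α : h →ₗ[ℝ] h →ₗ[ℝ] Module.Dual ℝ h)
    (haltα : ∀ x : h, α x x = 0)
    (hcocycle : ∀ x y z : h,
      -((α y z).comp (D x)) + (α x z).comp (D y) - (α x y).comp (D z)
        - α ⁅x, y⁆ z + α ⁅x, z⁆ y - α ⁅y, z⁆ x = 0)
    (hbianchi : ∀ x y z : h, α x y z + α y z x + α z x y = 0)
    (B : (h × Module.Dual ℝ h) → (h × Module.Dual ℝ h) → (h × Module.Dual ℝ h))
    (hB : ∀ a b : h × Module.Dual ℝ h,
      B a b = (⁅a.1, b.1⁆, α a.1 b.1 - (b.2).comp (D a.1) + (a.2).comp (D b.1)))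
    (W : (h × Module.Dual ℝ h) → (h × Module.Dual ℝ h) → ℝ)
    (hW : ∀ a b : h × Module.Dual ℝ h, W a b = b.2 a.1 - a.2 b.1)
    (star : (h × Module.Dual ℝ h) → (h × Module.Dual ℝ h) → (h × Module.Dual ℝ h))
    (hstar : ∀ a b c : h × Module.Dual ℝ h, W (star a b) c = -(W b (B a c))) :
    (∀ x y : h, star (x, 0) (y, 0) = (D x y, (α x).flip y)) ∧
    (∀ ξ₁ ξ₂ : Module.Dual ℝ h, star (0, ξ₁) (0, ξ₂) = 0) ∧
    (∀ (ξ : Module.Dual ℝ h) (x : h),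
      star (0, ξ) (x, 0) = (0, ξ.comp (D x - LieAlgebra.ad ℝ h x))) ∧
    (∀ (x : h) (ξ : Module.Dual ℝ h),
      star (x, 0) (0, ξ) = (0, -(ξ.comp (LieAlgebra.ad ℝ h x)))) :=
  induced_connection_explicit_formulas_general h D htf α B hB W hW star hstar
end

section
/- On the 3-dimensional abelian real Lie algebra h = ℝ³ with basis e₁,e₂,e₃, the bilinear product defined by ∇_{e₃}e_j = e_j for j=1,2,3, ∇_{e₁}e₃ = e₁, ∇_{e₂}e₃ = e₂, and all other products of basis vectors zero, is a flat torsion-free connection (i.e., ∇_x y = ∇_y x since the bracket is zero, and ∇_x∇_y = ∇_y∇_x) admitting e₃ as a right-identity element (∇_x e₃ = x for all x). -/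
/-!
Sending `e₃ ↦ 1` and `e₁, e₂` to the basis of `ℝ²` identifies `∇` with the multiplication of
the trivial square-zero extension `ℝ ⊕ ℝ²`, a commutative ring with unit `e₃`. Commutativity
gives torsion-freeness, commutativity together with associativity gives `x(yz) = y(xz)`, i.e.
flatness, and the unit is the right identity.
-/

open TrivSqZeroExt

section PullbackMul

variable {M A : Type*} {D : M → M → M} {f : M → A}

theorem comm_of_injective_map_mul [CommMagma A] (hf : Function.Injective f)
    (hD : ∀ x y, f (D x y) = f x * f y) (x y : M) : D x y = D y x :=
  hf <| by rw [hD, hD, mul_comm]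

theorem left_comm_of_injective_map_mul [CommSemigroup A] (hf : Function.Injective f)
    (hD : ∀ x y, f (D x y) = f x * f y) (x y z : M) : D x (D y z) = D y (D x z) :=
  hf <| by simp only [hD, mul_left_comm]

theorem right_identity_of_injective_map_mul [MulOneClass A] (hf : Function.Injective f)
    (hD : ∀ x y, f (D x y) = f x * f y) {u : M} (hu : f u = 1) (x : M) : D x u = x :=
  hf <| by rw [hD, hu, mul_one]

end PullbackMul

section SquareZeroCoord

variable (R : Type*) [CommRing R] (n : ℕ)

def squareZeroCoord : (Fin (n + 1) → R) →ₗ[R] TrivSqZeroExt R (Fin n → R) :=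
  Algebra.linearMap R _ ∘ₗ LinearMap.proj (Fin.last n) +
    inrHom R _ ∘ₗ LinearMap.funLeft R R Fin.castSucc

variable {R n}

theorem squareZeroCoord_apply (x : Fin (n + 1) → R) :
    squareZeroCoord R n x = inl (x (Fin.last n)) + inr (x ∘ Fin.castSucc) := rfl

theorem squareZeroCoord_injective : Function.Injective (squareZeroCoord R n) := by
  intro x y hxy
  have hfst := congr_arg fst hxy
  have hsnd := congr_arg snd hxy
  simp only [squareZeroCoord_apply, fst_add, fst_inl, fst_inr, snd_add, snd_inl, snd_inr,
    add_zero, zero_add] at hfst hsnd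
  funext i
  induction i using Fin.lastCases with
  | last => exact hfst
  | cast i => exact congr_fun hsnd i

theorem squareZeroCoord_single_last : squareZeroCoord R n (Pi.single (Fin.last n) 1) = 1 := by
  refine TrivSqZeroExt.ext ?_ ?_ <;>
    simp [squareZeroCoord_apply, funext_iff, Fin.castSucc_ne_last]

theorem squareZeroCoord_single_castSucc (i : Fin n) :
    squareZeroCoord R n (Pi.single i.castSucc 1) = inr (Pi.single i 1) := by
  refine TrivSqZeroExt.ext ?_ ?_ <;>
    simp [squareZeroCoord_apply, Pi.single_apply, funext_iff, Fin.castSucc_ne_last, eq_comm]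

end SquareZeroCoord

/-- On the abelian Lie algebra `ℝ³` (trivial bracket), the bilinear product
with `∇_{e₃}e_j = e_j` (j = 1,2,3), `∇_{e₁}e₃ = e₁`, `∇_{e₂}e₃ = e₂`, and all
other basis products zero, is a flat torsion-free connection (commutative with
commuting left multiplications, since the bracket vanishes) admitting `e₃` as a
right-identity element. -/
theorem flat_connection_on_abelian_R3
    (D : (Fin 3 → ℝ) →ₗ[ℝ] (Fin 3 → ℝ) →ₗ[ℝ] (Fin 3 → ℝ))
    (e : Fin 3 → Fin 3 → ℝ)
    (he : ∀ i : Fin 3, e i = Pi.single i 1)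
    (h11 : D (e 0) (e 0) = 0) (h12 : D (e 0) (e 1) = 0) (h13 : D (e 0) (e 2) = e 0)
    (h21 : D (e 1) (e 0) = 0) (h22 : D (e 1) (e 1) = 0) (h23 : D (e 1) (e 2) = e 1)
    (h31 : D (e 2) (e 0) = e 0) (h32 : D (e 2) (e 1) = e 1) (h33 : D (e 2) (e 2) = e 2) :
    (∀ x y : Fin 3 → ℝ, D x y = D y x) ∧
    (∀ x y z : Fin 3 → ℝ, D x (D y z) = D y (D x z)) ∧
    (∀ x : Fin 3 → ℝ, D x (e 2) = x) := by
  set φ := squareZeroCoord ℝ 2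
  have he0 : φ (e 0) = inr (Pi.single 0 1) := by rw [he]; exact squareZeroCoord_single_castSucc 0
  have he1 : φ (e 1) = inr (Pi.single 1 1) := by rw [he]; exact squareZeroCoord_single_castSucc 1
  have he2 : φ (e 2) = 1 := by rw [he]; exact squareZeroCoord_single_last
  have hD : ∀ x y, φ (D x y) = φ x * φ y := by
    suffices D.compr₂ φ = (LinearMap.mul ℝ _).compl₁₂ φ φ from fun x y => congr($this x y)
    refine LinearMap.ext_basis (Pi.basisFun ℝ (Fin 3)) (Pi.basisFun ℝ (Fin 3)) fun i j => ?_
    simp only [Pi.basisFun_apply, ← he, LinearMap.compr₂_apply, LinearMap.compl₁₂_apply,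
      LinearMap.mul_apply']
    fin_cases i <;> fin_cases j <;>
      simp [h11, h12, h13, h21, h22, h23, h31, h32, h33, he0, he1, he2]
  exact ⟨comm_of_injective_map_mul squareZeroCoord_injective hD,
    left_comm_of_injective_map_mul squareZeroCoord_injective hD,
    right_identity_of_injective_map_mul squareZeroCoord_injective hD he2⟩
end

section
/- The Lagrangian extension (g_{∇,α}, ω₀) of a flat Lie algebra (h, ∇) is a symplectic Novikov Lie algebra (i.e., the induced connection * satisfies (a*b)*c = (a*c)*b for all a,b,c) if and only if: (1) the flat algebra (h, ∇·) is Novikov and associative (the right multiplications ϱ(x) = ∇_x - ad_x pairwise commute and the associator of ∇ vanishes), and (2) α(∇_z y, ·)(x) + α(z,·)(y)∘ϱ(x) = α(∇_z x, ·)(y) + α(z,·)(x)∘ϱ(y) for all x,y,z ∈ h. -/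
/-!
Writing `a = (x, ξ)`, `b = (y, η)`, `c = (z, ζ)`, the product `(a * b) * c` is linear in `ξ, η, ζ`
and its `h`-component is `(x * y) * z`. Testing the Novikov identity on `(0, ξ), (x, 0), (y, 0)`,
on `(x, 0), (0, η), (z, 0)` and on `(z, 0), (y, 0), (x, 0)` separates it into three identities:
the right multiplications `ϱ` commute, `⁅x, w * z⁆ = ⁅x * z, w⁆`, and the condition on `α`.
For a left-symmetric product with commuting right multiplications the middle identity says
that the associator is antisymmetric in its first two arguments; left symmetry makes it
symmetric there, so it vanishes.
-/

open LieAlgebra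

section LagrangianExtension

variable {K h : Type*} [Field K] [LieRing h] [LieAlgebra K h] {D : h →ₗ[K] h →ₗ[K] h}

theorem sub_ad_apply_of_torsionFree (htf : ∀ x y : h, D x y - D y x = ⁅x, y⁆) (x w : h) :
    (D x - ad K h x) w = D w x := by
  rw [LinearMap.sub_apply, ad_apply, ← htf]
  abel

theorem sub_ad_comp_comm_iff (htf : ∀ x y : h, D x y - D y x = ⁅x, y⁆) :
    (∀ x y : h, (D x - ad K h x).comp (D y - ad K h y) = (D y - ad K h y).comp (D x - ad K h x))
      ↔ ∀ x y w : h, D (D w y) x = D (D w x) y := by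
  simp only [LinearMap.ext_iff, LinearMap.comp_apply, sub_ad_apply_of_torsionFree htf]

theorem forall_lie_mul_eq_iff_assoc [CharZero K] (htf : ∀ x y : h, D x y - D y x = ⁅x, y⁆)
    (hflat : ∀ x y z : h, D x (D y z) - D y (D x z) = D ⁅x, y⁆ z)
    (hrc : ∀ x y w : h, D (D w y) x = D (D w x) y) :
    (∀ x z w : h, ⁅x, D w z⁆ = ⁅D x z, w⁆) ↔ ∀ x y z : h, D (D x y) z = D x (D y z) := by
  constructor
  · intro hlie x y z
    have hantisymm : D x (D y z) - D (D y x) z = D (D x y) z - D y (D x z) := by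
      rw [← hrc x z y, ← hrc y z x, htf, htf]
      exact hlie x z y
    have hleftSymm : D x (D y z) - D y (D x z) = D (D x y) z - D (D y x) z := by
      rw [hflat, ← htf, map_sub, LinearMap.sub_apply]
    have htwice : (2 : K) • D x (D y z) = (2 : K) • D (D x y) z := by
      linear_combination (norm := module) hantisymm + hleftSymm
    exact (smul_right_injective h two_ne_zero htwice).symm
  · intro hassoc x z w
    rw [← htf, ← htf, ← hassoc, ← hassoc, hrc x z w, hrc w z x]

theorem eq_of_forall_dual_apply_eq {V : Type*} [AddCommGroup V] [Module K V] {v w : V}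
    (hvw : ∀ φ : Module.Dual K V, φ v = φ w) : v = w :=
  Module.eval_apply_injective K (LinearMap.ext hvw)

def lagrangianStar (D : h →ₗ[K] h →ₗ[K] h) (α : h →ₗ[K] h →ₗ[K] Module.Dual K h)
    (a b : h × Module.Dual K h) : h × Module.Dual K h :=
  (D a.1 b.1, (α a.1).flip b.1 + a.2.comp (D b.1 - ad K h b.1) - b.2.comp (ad K h a.1))

theorem lagrangianStar_right_comm_iff (α : h →ₗ[K] h →ₗ[K] Module.Dual K h)
    (htf : ∀ x y : h, D x y - D y x = ⁅x, y⁆) :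
    (∀ a b c : h × Module.Dual K h, lagrangianStar D α (lagrangianStar D α a b) c
        = lagrangianStar D α (lagrangianStar D α a c) b)
      ↔ ((∀ x y : h,
            (D x - ad K h x).comp (D y - ad K h y) = (D y - ad K h y).comp (D x - ad K h x)) ∧
         (∀ x z w : h, ⁅x, D w z⁆ = ⁅D x z, w⁆) ∧
         (∀ x y z : h,
            (α (D z y)).flip x + ((α z).flip y).comp (D x - ad K h x)
              = (α (D z x)).flip y + ((α z).flip x).comp (D y - ad K h y))) := by
  constructor
  · intro H
    refine ⟨fun x y => ?_, fun x z w => ?_, fun x y z => ?_⟩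
    · ext w
      refine eq_of_forall_dual_apply_eq (K := K) fun φ => ?_
      have hw := LinearMap.congr_fun (congrArg Prod.snd (H (0, φ) (x, 0) (y, 0))) w
      simpa [lagrangianStar] using hw
    · refine eq_of_forall_dual_apply_eq (K := K) fun φ => ?_
      have hw := LinearMap.congr_fun (congrArg Prod.snd (H (x, 0) (0, φ) (z, 0))) w
      simpa [lagrangianStar, sub_ad_apply_of_torsionFree htf] using hw
    · simpa [lagrangianStar] using congrArg Prod.snd (H (z, 0) (y, 0) (x, 0))
  · rintro ⟨hcomm, hlie, hα⟩ ⟨x, ξ⟩ ⟨y, η⟩ ⟨z, ζ⟩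
    have hadj : ∀ x z : h, (ad K h x).comp (D z - ad K h z) = ad K h (D x z) := fun x z =>
      LinearMap.ext fun w => by
        rw [LinearMap.comp_apply, sub_ad_apply_of_torsionFree htf, ad_apply, ad_apply, hlie]
    simp only [lagrangianStar, Prod.mk.injEq, LinearMap.sub_comp, LinearMap.add_comp,
      LinearMap.comp_assoc, hadj, hcomm y z]
    refine ⟨(sub_ad_comp_comm_iff htf).1 hcomm z y x, ?_⟩
    linear_combination (norm := abel) hα z y x

end LagrangianExtension

theorem lagrangian_extension_snla_iff_general
    (h : Type*) [LieRing h] [LieAlgebra ℝ h]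
    (D : h →ₗ[ℝ] h →ₗ[ℝ] h)
    (htf : ∀ x y : h, D x y - D y x = ⁅x, y⁆)
    (hflat : ∀ x y z : h, D x (D y z) - D y (D x z) = D ⁅x, y⁆ z)
    (α : h →ₗ[ℝ] h →ₗ[ℝ] Module.Dual ℝ h)
    (star : (h × Module.Dual ℝ h) → (h × Module.Dual ℝ h) → (h × Module.Dual ℝ h))
    (hstar : ∀ a b : h × Module.Dual ℝ h,
      star a b = (D a.1 b.1,
        (α a.1).flip b.1 + (a.2).comp (D b.1 - LieAlgebra.ad ℝ h b.1)
          - (b.2).comp (LieAlgebra.ad ℝ h a.1))) :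
    (∀ a b c : h × Module.Dual ℝ h, star (star a b) c = star (star a c) b)
      ↔ ((∀ x y : h,
            (D x - LieAlgebra.ad ℝ h x).comp (D y - LieAlgebra.ad ℝ h y)
              = (D y - LieAlgebra.ad ℝ h y).comp (D x - LieAlgebra.ad ℝ h x)) ∧
         (∀ x y z : h, D (D x y) z = D x (D y z)) ∧
         (∀ x y z : h,
            (α (D z y)).flip x + ((α z).flip y).comp (D x - LieAlgebra.ad ℝ h x)
              = (α (D z x)).flip y
                + ((α z).flip x).comp (D y - LieAlgebra.ad ℝ h y))) := by
  obtain rfl : star = lagrangianStar D α := funext fun a => funext (hstar a)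
  rw [lagrangianStar_right_comm_iff α htf]
  exact and_congr_right fun hcomm => and_congr_left' <|
    forall_lie_mul_eq_iff_assoc htf hflat ((sub_ad_comp_comm_iff htf).1 hcomm)

/-- The Lagrangian extension `(g_{∇,α}, ω₀)` is a symplectic Novikov Lie
algebra — i.e. the induced connection `*` satisfies `(a*b)*c = (a*c)*b` — if
and only if: (1) the right multiplications `ϱ(x) = ∇_x - ad_x` pairwise commute
and `∇` is associative, and (2) the cocycle `α` satisfies
`α(∇_z y,·)(x) + α(z,·)(y)∘ϱ(x) = α(∇_z x,·)(y) + α(z,·)(x)∘ϱ(y)`. -/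
theorem lagrangian_extension_snla_iff
    (h : Type*) [LieRing h] [LieAlgebra ℝ h] [FiniteDimensional ℝ h]
    (D : h →ₗ[ℝ] h →ₗ[ℝ] h)
    (htf : ∀ x y : h, D x y - D y x = ⁅x, y⁆)
    (hflat : ∀ x y z : h, D x (D y z) - D y (D x z) = D ⁅x, y⁆ z)
    (α : h →ₗ[ℝ] h →ₗ[ℝ] Module.Dual ℝ h)
    (haltα : ∀ x : h, α x x = 0)
    (hcocycle : ∀ x y z : h,
      -((α y z).comp (D x)) + (α x z).comp (D y) - (α x y).comp (D z)
        - α ⁅x, y⁆ z + α ⁅x, z⁆ y - α ⁅y, z⁆ x = 0)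
    (hbianchi : ∀ x y z : h, α x y z + α y z x + α z x y = 0)
    (star : (h × Module.Dual ℝ h) → (h × Module.Dual ℝ h) → (h × Module.Dual ℝ h))
    (hstar : ∀ a b : h × Module.Dual ℝ h,
      star a b = (D a.1 b.1,
        (α a.1).flip b.1 + (a.2).comp (D b.1 - LieAlgebra.ad ℝ h b.1)
          - (b.2).comp (LieAlgebra.ad ℝ h a.1))) :
    (∀ a b c : h × Module.Dual ℝ h, star (star a b) c = star (star a c) b)
      ↔ ((∀ x y : h,
            (D x - LieAlgebra.ad ℝ h x).comp (D y - LieAlgebra.ad ℝ h y)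
              = (D y - LieAlgebra.ad ℝ h y).comp (D x - LieAlgebra.ad ℝ h x)) ∧
         (∀ x y z : h, D (D x y) z = D x (D y z)) ∧
         (∀ x y z : h,
            (α (D z y)).flip x + ((α z).flip y).comp (D x - LieAlgebra.ad ℝ h x)
              = (α (D z x)).flip y
                + ((α z).flip x).comp (D y - LieAlgebra.ad ℝ h y))) :=
  lagrangian_extension_snla_iff_general h D htf hflat α star hstar
end
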